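/- arXiv:1708.07230 — 2 statements merged into one kernel-verified Lean document; each statement's English description precedes it below -/
import Mathlib

section
/- If for every prefix t' of a ground trace t the set approxΔ*({q₀}, t') contains no bad state of the DATE D, then t satisfies D, i.e. t ⊢ D. -/
open Classical

/-- A property automaton over states `Q` and alphabet `E`: a deterministic and
total transition relation is represented as a transition function. -/
structure PA (Q : Type*) (E : Type*) where
  init : Q
  bad : Set Q
  next : Q → E → Q

namespace PA

variable {Q E : Type*}

/-- Iterated application of the transition function along a ground trace. -/
def run (π : PA Q E) (q : Q) (t : List E) : Q := t.foldl π.next q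

/-- A ground trace satisfies a property automaton iff no prefix of it leads
from the initial state to a bad state. -/
def Sat (t : List E) (π : PA Q E) : Prop :=
  ∀ t' : List E, t' <+: t → π.run π.init t' ∉ π.bad

/-- Equivalence of two property automata with respect to a set of ground traces. -/
def EquivOn (T : Set (List E)) (π π' : PA Q E) : Prop :=
  ∀ t ∈ T, Sat t π ↔ Sat t π'

end PA

/-- A static program: a set of static parametrised traces over identifiers `α`,
together with a must-alias equivalence relation and a may-alias relation. -/
structure SProg (α : Type*) (E : Type*) where
  traces : Set (List (α × E))
  must : α → α → Prop
  may : α → α → Prop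
  must_equiv : Equivalence must
  must_sub_may : ∀ {x y : α}, must x y → may x y

namespace SProg

variable {α E : Type*}

-- Projection of a static parametrised trace onto an identifier `x`,
-- yielding the set of possible ground traces.
open Classical in
noncomputable def proj (P : SProg α E) (x : α) : List (α × E) → Set (List E)
  | [] => {[]}
  | (x', e) :: st =>
      if P.must x x' then (e :: ·) '' P.proj x st
      else if P.may x x' then P.proj x st ∪ (e :: ·) '' P.proj x st
      else P.proj x st

/-- The projection of a static program onto a single identifier. -/
def projId (P : SProg α E) (x : α) : Set (List E) :=
  {t | ∃ st ∈ P.traces, t ∈ P.proj x st}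

/-- The projection of a static program onto all identifiers (`P ⇓ OId`). -/
def projAll (P : SProg α E) : Set (List E) :=
  {t | ∃ st ∈ P.traces, ∃ x : α, t ∈ P.proj x st}

end SProg

/-- Satisfaction of a property automaton by a static parametrised trace:
every projection onto every identifier satisfies the automaton. -/
def PA.SSat {α Q E : Type*} (P : SProg α E) (st : List (α × E)) (π : PA Q E) : Prop :=
  ∀ x : α, ∀ t ∈ P.proj x st, PA.Sat t π

/-- Equivalence of two property automata with respect to a static program. -/
def PA.SEquiv {α Q E : Type*} (P : SProg α E) (π π' : PA Q E) : Prop :=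
  ∀ st ∈ P.traces, PA.SSat P st π ↔ PA.SSat P st π'

/-- A transition of a DATE: source state, event, condition, action, target state. -/
structure DTrans (Q : Type*) (E : Type*) (Θ : Type*) where
  src : Q
  ev : E
  cond : Θ → Bool
  act : Θ → Θ
  tgt : Q

/-- A DATE (without timers/channels): states `Q`, events `E`, monitoring
variable states `Θ`, initial state, initial monitoring state, bad states,
and a transition relation. -/
structure DATE (Q : Type*) (E : Type*) (Θ : Type*) where
  init : Q
  th0 : Θ
  bad : Set Q
  delta : Set (DTrans Q E Θ)

namespace DATE

variable {Q E Θ : Type*}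

/-- Determinism: from each state, any two distinct transitions with the same
event have conditions that are never simultaneously true. -/
def Deterministic (D : DATE Q E Θ) : Prop :=
  ∀ d ∈ D.delta, ∀ d' ∈ D.delta,
    d.src = d'.src → d.ev = d'.ev → d ≠ d' →
      ∀ θ : Θ, ¬(d.cond θ = true ∧ d'.cond θ = true)

/-- The concrete transition function `Δ`. -/
noncomputable def step (D : DATE Q E Θ) (s : Q × Θ) (e : E) : Q × Θ :=
  if h : ∃ d ∈ D.delta, d.src = s.1 ∧ d.ev = e ∧ d.cond s.2 = true
  then (h.choose.tgt, h.choose.act s.2)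
  else s

/-- `Δ*`: iterated concrete transition function along a ground trace. -/
noncomputable def run (D : DATE Q E Θ) (s : Q × Θ) (t : List E) : Q × Θ :=
  t.foldl D.step s

/-- A ground trace satisfies a DATE iff no prefix of it drives `Δ*` from the
initial configuration into a bad state. -/
def Sat (t : List E) (D : DATE Q E Θ) : Prop :=
  ∀ t' : List E, t' <+: t → (D.run (D.init, D.th0) t').1 ∉ D.bad

/-- Equivalence of two DATEs with respect to a set of ground traces. -/
def EquivOn (T : Set (List E)) (D D' : DATE Q E Θ) : Prop :=
  ∀ t ∈ T, Sat t D ↔ Sat t D'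

/-- The static transition relation `q →e_approx q'`. -/
def ApproxStep (D : DATE Q E Θ) (q : Q) (e : E) (q' : Q) : Prop :=
  (∃ d ∈ D.delta, d.src = q ∧ d.ev = e ∧ d.tgt = q' ∧ ¬ ∀ θ : Θ, d.cond θ = false)
  ∨ (q' = q ∧ ¬ ∃ d ∈ D.delta, d.src = q ∧ d.ev = e ∧ d.tgt ≠ q ∧ ∀ θ : Θ, d.cond θ = true)

/-- The static transition function on sets of states. -/
def approxSet (D : DATE Q E Θ) (S : Set Q) (e : E) : Set Q :=
  {q' | ∃ q ∈ S, D.ApproxStep q e q'}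

/-- `approxΔ*`: iterated static transition function along a ground trace. -/
def approxRun (D : DATE Q E Θ) (S : Set Q) (t : List E) : Set Q :=
  t.foldl D.approxSet S

/-- `q ↪ q'`: `q'` is reachable from `q` via the static transition relation. -/
def Reach (D : DATE Q E Θ) (q q' : Q) : Prop :=
  ∃ t : List E, q' ∈ D.approxRun {q} t

/-- `badAfter(q)`: `q` is reachable from the initial state and can reach a bad state. -/
def BadAfter (D : DATE Q E Θ) (q : Q) : Prop :=
  D.Reach D.init q ∧ ∃ q' ∈ D.bad, D.Reach q q'

/-- `goodEntryPoint(q)`. -/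
def GoodEntryPoint (D : DATE Q E Θ) (q : Q) : Prop :=
  ¬ D.BadAfter q ∧ ∃ q' : Q, ∃ e : E, D.BadAfter q' ∧ D.ApproxStep q' e q

/-- `useful(q)`. -/
def Useful (D : DATE Q E Θ) (q : Q) : Prop :=
  D.BadAfter q ∨ D.GoodEntryPoint q

/-- Restriction of a DATE to a set of transitions (`D ↾ δ'`). -/
def restrict (D : DATE Q E Θ) (δ' : Set (DTrans Q E Θ)) : DATE Q E Θ :=
  { D with delta := D.delta ∩ δ' }

/-- The reachability-reduced DATE `reach(D)`: only useful states and
transitions between useful states are kept. -/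
def reachReduce (D : DATE Q E Θ) : DATE Q E Θ :=
  D.restrict {d | D.Useful d.src ∧ D.Useful d.tgt}

/-- Alphabet restriction `D ↾ Σ'`. -/
def alphaRestrict (D : DATE Q E Θ) (A : Set E) : DATE Q E Θ :=
  D.restrict {d | d.ev ∈ A}

/-- `Σ(T)`: the set of events occurring in some trace of `T`. -/
def eventsOf (T : Set (List E)) : Set E :=
  {e | ∃ t ∈ T, e ∈ t}

/-- Component-wise union of two DATEs (sharing initial state and initial
monitoring state). -/
def union (D₁ D₂ : DATE Q E Θ) : DATE Q E Θ :=
  { init := D₁.init, th0 := D₁.th0, bad := D₁.bad ∪ D₂.bad,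
    delta := D₁.delta ∪ D₂.delta }

/-- Component-wise union of a family of DATEs, with given initial state and
initial monitoring state. -/
def unionFamily {ι : Type*} (q0 : Q) (θ0 : Θ) (f : ι → DATE Q E Θ) : DATE Q E Θ :=
  { init := q0, th0 := θ0, bad := ⋃ i, (f i).bad, delta := ⋃ i, (f i).delta }

/-- A ground trace `t` uses a transition `d`. -/
def Uses (D : DATE Q E Θ) (t : List E) (d : DTrans Q E Θ) : Prop :=
  (¬ ∀ θ : Θ, d.cond θ = false) ∧
    ∃ t' : List E, (t' ++ [d.ev]) <+: t ∧ d.src ∈ D.approxRun {D.init} t'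

/-- Satisfaction of a DATE by a static parametrised trace. -/
def SSat {α : Type*} (P : SProg α E) (st : List (α × E)) (D : DATE Q E Θ) : Prop :=
  ∀ x : α, ∀ t ∈ P.proj x st, Sat t D

/-- Equivalence of two DATEs with respect to a static program. -/
def SEquiv {α : Type*} (P : SProg α E) (D D' : DATE Q E Θ) : Prop :=
  ∀ st ∈ P.traces, SSat P st D ↔ SSat P st D'

end DATE

/-- Translation of a property automaton into a DATE with `Θ = Unit`:
each transition `(q, e, q')` becomes `q —e|true↦skip→ q'`. -/
def PA.toDATE {Q E : Type*} (π : PA Q E) : DATE Q E Unit :=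
  { init := π.init, th0 := (), bad := π.bad,
    delta := {d | d.cond = (fun _ => true) ∧ d.act = id ∧ d.tgt = π.next d.src d.ev} }

/-- The flow-sensitive residual `residual₂(D, P)`. -/
def DATE.residual2 {α Q E Θ : Type*} (D : DATE Q E Θ) (P : SProg α E) : DATE Q E Θ :=
  (D.restrict {d | ∃ t ∈ P.projAll, D.Uses t d}).reachReduce

/-- Consecutive application of the flow-sensitive residual over a list of
static program over-approximations. -/
def DATE.residual2List {α Q E Θ : Type*} (D : DATE Q E Θ) :
    List (SProg α E) → DATE Q E Θ
  | [] => D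
  | P :: Ps => DATE.residual2List (D.residual2 P) Ps

namespace DATE

variable {Q E Θ : Type*}

/-- If a transition fires, its condition is satisfiable; if none fires, no transition with
condition constantly `true` leaves the state, so staying put is a static step. -/
lemma approxStep_step (D : DATE Q E Θ) (s : Q × Θ) (e : E) :
    D.ApproxStep s.1 e (D.step s e).1 := by
  unfold step
  split
  case isTrue hfires =>
    obtain ⟨hd, hsrc, hev, hcond⟩ := hfires.choose_spec
    exact Or.inl ⟨hfires.choose, hd, hsrc, hev, rfl, fun hfalse => by simp [hfalse] at hcond⟩
  case isFalse hnone =>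
    exact Or.inr ⟨rfl, fun ⟨d, hd, hsrc, hev, _, htrue⟩ => hnone ⟨d, hd, hsrc, hev, htrue s.2⟩⟩

lemma step_fst_mem_approxSet (D : DATE Q E Θ) {S : Set Q} {s : Q × Θ} (hs : s.1 ∈ S) (e : E) :
    (D.step s e).1 ∈ D.approxSet S e :=
  ⟨s.1, hs, D.approxStep_step s e⟩

lemma run_fst_mem_approxRun (D : DATE Q E Θ) (t : List E) {S : Set Q} {s : Q × Θ}
    (hs : s.1 ∈ S) : (D.run s t).1 ∈ D.approxRun S t := by
  induction t generalizing s S with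
  | nil => exact hs
  | cons e t ih => exact ih (D.step_fst_mem_approxSet hs e)

end DATE

theorem sat_of_approxRun_no_bad_general {Q E Θ : Type*} (D : DATE Q E Θ)
    (t : List E)
    (h : ∀ t' : List E, t' <+: t → ∀ q ∈ D.approxRun {D.init} t', q ∉ D.bad) :
    DATE.Sat t D :=
  fun t' hpre => h t' hpre _ (D.run_fst_mem_approxRun t' rfl)

/-- If for every prefix `t'` of a ground trace `t` the set
`approxΔ*({q₀}, t')` contains no bad state, then `t ⊢ D`. -/
theorem sat_of_approxRun_no_bad {Q E Θ : Type*} (D : DATE Q E Θ)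
    (hdet : D.Deterministic) (t : List E)
    (h : ∀ t' : List E, t' <+: t → ∀ q ∈ D.approxRun {D.init} t', q ∉ D.bad) :
    DATE.Sat t D :=
  sat_of_approxRun_no_bad_general D t h
end

section
/- Given sets of ground traces T₀, T₁ ⊆ Σ* and a DATE D, the component-wise union of the reachability-reduced alphabet-restrictions of D with respect to each set of traces is equivalent to D with respect to the union of the sets of traces: reach(D ↾ Σ(T₀)) ⊔ reach(D ↾ Σ(T₁)) ≅_{T₀ ∪ T₁} D. -/
open Classical

/-! `D` is deterministic, so a sub-DATE `U` of `D` fires, from any configuration, the same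
transition as `D` as soon as `U` contains that transition. For a trace over `A`, every
configuration visited by either run lies in a state statically reachable in `D ↾ A`. While the
current state can still reach a bad state, it is useful in `D ↾ A`, and so is the target of the
transition `D` fires from it; that transition survives in `reach(D ↾ A)`, hence in `U`, and the
two runs move in lockstep. Once no bad state is reachable any more, neither run can meet one.
A trace of `T₀ ∪ T₁` is over `Σ(T₀)` or over `Σ(T₁)`, and the union lies between the
corresponding reduction and `D`. -/

namespace DATE

variable {Q E Θ : Type*}

lemma step_eq_self {V : DATE Q E Θ} {q : Q} {θ : Θ} {e : E}
    (h : ¬ ∃ d ∈ V.delta, d.src = q ∧ d.ev = e ∧ d.cond θ = true) :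
    V.step (q, θ) e = (q, θ) :=
  dif_neg h

lemma step_eq_of_mem {D V : DATE Q E Θ} (hdet : D.Deterministic) (hV : V.delta ⊆ D.delta)
    {q : Q} {θ : Θ} {e : E} {d : DTrans Q E Θ} (hd : d ∈ V.delta) (hsrc : d.src = q)
    (hev : d.ev = e) (hc : d.cond θ = true) :
    V.step (q, θ) e = (d.tgt, d.act θ) := by
  have h : ∃ d' ∈ V.delta, d'.src = q ∧ d'.ev = e ∧ d'.cond θ = true := ⟨d, hd, hsrc, hev, hc⟩
  obtain ⟨hd', hsrc', hev', hc'⟩ := h.choose_spec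
  have hchoose : h.choose = d := by
    by_contra hne
    exact hdet _ (hV hd') _ (hV hd) (hsrc'.trans hsrc.symm) (hev'.trans hev.symm) hne θ ⟨hc', hc⟩
  simp only [step, dif_pos h, hchoose]

lemma step_cases (V : DATE Q E Θ) (q : Q) (θ : Θ) (e : E) :
    V.step (q, θ) e = (q, θ) ∨
      ∃ d ∈ V.delta, d.src = q ∧ d.ev = e ∧ d.cond θ = true ∧
        V.step (q, θ) e = (d.tgt, d.act θ) := by
  by_cases h : ∃ d ∈ V.delta, d.src = q ∧ d.ev = e ∧ d.cond θ = true
  · obtain ⟨hd, hsrc, hev, hc⟩ := h.choose_spec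
    exact Or.inr ⟨h.choose, hd, hsrc, hev, hc, dif_pos h⟩
  · exact Or.inl (step_eq_self h)

lemma run_cons (V : DATE Q E Θ) (s : Q × Θ) (e : E) (t : List E) :
    V.run s (e :: t) = V.run (V.step s e) t := rfl

section Reach

lemma reach_refl (W : DATE Q E Θ) (q : Q) : W.Reach q q :=
  ⟨[], Set.mem_singleton q⟩

lemma Reach.tail {W : DATE Q E Θ} {p q q' : Q} {e : E}
    (h : W.Reach p q) (hstep : W.ApproxStep q e q') : W.Reach p q' := by
  obtain ⟨t, ht⟩ := h
  refine ⟨t ++ [e], ?_⟩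
  rw [approxRun, List.foldl_append]
  exact ⟨q, ht, hstep⟩

lemma approxStep_of_mem {W : DATE Q E Θ} {d : DTrans Q E Θ} {θ : Θ} (hd : d ∈ W.delta)
    (hc : d.cond θ = true) : W.ApproxStep d.src d.ev d.tgt :=
  Or.inl ⟨d, hd, rfl, rfl, rfl, fun hfalse => by simp [hfalse θ] at hc⟩

lemma mem_alphaRestrict_delta {D : DATE Q E Θ} {A : Set E} {d : DTrans Q E Θ} :
    d ∈ (D.alphaRestrict A).delta ↔ d ∈ D.delta ∧ d.ev ∈ A :=
  Iff.rfl

variable {D V : DATE Q E Θ} {A : Set E}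

lemma reach_step {p q : Q} (hV : V.delta ⊆ D.delta) (θ : Θ) {e : E} (he : e ∈ A)
    (hq : (D.alphaRestrict A).Reach p q) : (D.alphaRestrict A).Reach p (V.step (q, θ) e).1 := by
  rcases step_cases V q θ e with hstep | ⟨d, hd, rfl, rfl, hc, hstep⟩
  · rwa [hstep]
  · rw [hstep]
    exact hq.tail (approxStep_of_mem (mem_alphaRestrict_delta.2 ⟨hV hd, he⟩) hc)

lemma reach_run {p : Q} (hV : V.delta ⊆ D.delta) :
    ∀ (t : List E) (q : Q) (θ : Θ), (∀ e ∈ t, e ∈ A) →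
      (D.alphaRestrict A).Reach p q → (D.alphaRestrict A).Reach p (V.run (q, θ) t).1
  | [], _, _, _, hq => hq
  | e :: t, q, θ, ht, hq => by
    rw [run_cons]
    exact reach_run hV t _ _ (fun e' he' => ht e' (List.mem_cons_of_mem e he'))
      (reach_step hV θ (ht e List.mem_cons_self) hq)

end Reach

lemma useful_of_approxStep {W : DATE Q E Θ} {q q' : Q} {e : E} (hq : W.BadAfter q)
    (hstep : W.ApproxStep q e q') : W.Useful q' := by
  by_cases hq' : W.BadAfter q'
  · exact Or.inl hq'
  · exact Or.inr ⟨hq', q, e, hq, hstep⟩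

lemma reachReduce_delta_subset (W : DATE Q E Θ) : W.reachReduce.delta ⊆ W.delta :=
  Set.inter_subset_left

lemma alphaRestrict_delta_subset (D : DATE Q E Θ) (A : Set E) :
    (D.alphaRestrict A).delta ⊆ D.delta :=
  Set.inter_subset_left

section Sandwich

variable {D U : DATE Q E Θ} {A : Set E}

lemma step_eq_of_badAfter (hdet : D.Deterministic) (hU : U.delta ⊆ D.delta)
    (hRU : (D.alphaRestrict A).reachReduce.delta ⊆ U.delta) {q : Q} (θ : Θ) {e : E}
    (he : e ∈ A) (hq : (D.alphaRestrict A).BadAfter q) : U.step (q, θ) e = D.step (q, θ) e := by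
  by_cases hfire : ∃ d ∈ D.delta, d.src = q ∧ d.ev = e ∧ d.cond θ = true
  · obtain ⟨d, hd, rfl, rfl, hc⟩ := hfire
    have hdA : d ∈ (D.alphaRestrict A).delta := mem_alphaRestrict_delta.2 ⟨hd, he⟩
    have hdR : d ∈ (D.alphaRestrict A).reachReduce.delta :=
      ⟨hdA, Or.inl hq, useful_of_approxStep hq (approxStep_of_mem hdA hc)⟩
    rw [step_eq_of_mem hdet hU (hRU hdR) rfl rfl hc, step_eq_of_mem hdet subset_rfl hd rfl rfl hc]
  · rw [step_eq_self hfire, step_eq_self fun ⟨d, hd, hfire'⟩ => hfire ⟨d, hU hd, hfire'⟩]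

lemma run_mem_bad_iff (hdet : D.Deterministic) (hU : U.delta ⊆ D.delta)
    (hRU : (D.alphaRestrict A).reachReduce.delta ⊆ U.delta) :
    ∀ (t : List E) (q : Q) (θ : Θ), (∀ e ∈ t, e ∈ A) → (D.alphaRestrict A).Reach D.init q →
      ((U.run (q, θ) t).1 ∈ D.bad ↔ (D.run (q, θ) t).1 ∈ D.bad)
  | [], _, _, _, _ => Iff.rfl
  | e :: t, q, θ, ht, hq => by
    have he : e ∈ A := ht e List.mem_cons_self
    by_cases hbad : ∃ b ∈ D.bad, (D.alphaRestrict A).Reach q b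
    · rw [run_cons, run_cons, step_eq_of_badAfter hdet hU hRU θ he ⟨hq, hbad⟩]
      exact run_mem_bad_iff hdet hU hRU t _ _ (fun e' he' => ht e' (List.mem_cons_of_mem e he'))
        (reach_step subset_rfl θ he hq)
    · have hsafe {V : DATE Q E Θ} (hV : V.delta ⊆ D.delta) : (V.run (q, θ) (e :: t)).1 ∉ D.bad :=
        fun hmem => hbad ⟨_, hmem, reach_run hV _ q θ ht (reach_refl _ q)⟩
      exact iff_of_false (hsafe hU) (hsafe subset_rfl)

lemma sat_iff_of_reachReduce_subset (hdet : D.Deterministic) (hinit : U.init = D.init)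
    (hth0 : U.th0 = D.th0) (hbad : U.bad = D.bad) (hU : U.delta ⊆ D.delta)
    (hRU : (D.alphaRestrict A).reachReduce.delta ⊆ U.delta) {t : List E}
    (ht : ∀ e ∈ t, e ∈ A) : Sat t U ↔ Sat t D := by
  simp only [Sat, hinit, hth0, hbad]
  refine forall₂_congr fun s hs => not_congr ?_
  exact run_mem_bad_iff hdet hU hRU s D.init D.th0 (fun e he => ht e (hs.subset he))
    (reach_refl _ _)

end Sandwich

end DATE

/-- `reach(D ↾ Σ(T₀)) ⊔ reach(D ↾ Σ(T₁)) ≅_{T₀ ∪ T₁} D`. -/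
theorem union_of_residuals_equiv {Q E Θ : Type*} (D : DATE Q E Θ)
    (hdet : D.Deterministic) (T₀ T₁ : Set (List E)) :
    DATE.EquivOn (T₀ ∪ T₁)
      (DATE.union (D.alphaRestrict (DATE.eventsOf T₀)).reachReduce
                  (D.alphaRestrict (DATE.eventsOf T₁)).reachReduce)
      D := by
  set U := DATE.union (D.alphaRestrict (DATE.eventsOf T₀)).reachReduce
    (D.alphaRestrict (DATE.eventsOf T₁)).reachReduce
  have hsub (T : Set (List E)) : (D.alphaRestrict (DATE.eventsOf T)).reachReduce.delta ⊆ D.delta :=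
    (DATE.reachReduce_delta_subset _).trans (DATE.alphaRestrict_delta_subset D _)
  have hU : U.delta ⊆ D.delta := Set.union_subset (hsub T₀) (hsub T₁)
  have hbad : U.bad = D.bad := Set.union_self D.bad
  rintro t (ht | ht)
  · exact DATE.sat_iff_of_reachReduce_subset (U := U) hdet rfl rfl hbad hU
      Set.subset_union_left fun e he => ⟨t, ht, he⟩
  · exact DATE.sat_iff_of_reachReduce_subset (U := U) hdet rfl rfl hbad hU
      Set.subset_union_right fun e he => ⟨t, ht, he⟩
end
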